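/- arXiv:1706.02157 — 2 statements merged into one kernel-verified Lean document; each statement's English description precedes it below -/
import Mathlib

section
/- Let Ω be an algebraically closed field with proper algebraically closed subfield k, equipped with the pair topology (closed sets: finite unions of preimages of products of the linear-dependence loci Y_{kᵢ} under polynomial maps). Then every proper closed subset of k (with the subspace topology from Ω) is finite. -/
/-- A basic closed set of the pair topology on `Ωⁿ`: the preimage of a product
`Y_{k₁} × ⋯ × Y_{kₘ}` of linear-dependence loci under a polynomial map. -/
def IsBasicClosed {Ω : Type*} [Field Ω] (k : Subfield Ω) {n : ℕ}
    (C : Set (Fin n → Ω)) : Prop :=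
  ∃ (m : ℕ) (ks : Fin m → ℕ) (p : (i : Fin m) → Fin (ks i) → MvPolynomial (Fin n) Ω),
    C = {α | ∀ i, ¬ LinearIndependent k (fun j => MvPolynomial.eval α (p i j))}

/-- A closed set of the pair topology: a finite union of basic closed sets. -/
def IsPairClosed {Ω : Type*} [Field Ω] (k : Subfield Ω) {n : ℕ}
    (C : Set (Fin n → Ω)) : Prop :=
  ∃ (t : ℕ) (B : Fin t → Set (Fin n → Ω)),
    (∀ i, IsBasicClosed k (B i)) ∧ C = ⋃ i, B i

/-! For `α ∈ k` and a `k`-linear map `ψ : Ω → kⁿ`, the matrix `(ψ (pⱼ(α)))ᵢⱼ` has entries that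
are polynomials in `α` with coefficients in `k`, and the values `pⱼ(α)` are `k`-linearly
independent iff one of these matrices is invertible. So the `α ∈ k` at which they are dependent
form the common zero set of a family of polynomials in `k[X]`, which is finite or all of `k`.
Such subsets of `k` are stable under arbitrary intersections and finite unions, so the trace on
`k` of every pair-closed set is again finite or all of `k`. -/

open Polynomial

section FiniteOrUniv

variable {α ι : Type*} {s : ι → Set α}

theorem finite_or_eq_univ_iInter (h : ∀ i, (s i).Finite ∨ s i = Set.univ) :
    (⋂ i, s i).Finite ∨ ⋂ i, s i = Set.univ := by
  by_cases hfin : ∃ i, (s i).Finite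
  · obtain ⟨i, hi⟩ := hfin
    exact Or.inl (hi.subset (Set.iInter_subset s i))
  · exact Or.inr (Set.iInter_eq_univ.mpr fun i => (h i).resolve_left fun hi => hfin ⟨i, hi⟩)

theorem finite_or_eq_univ_iUnion [Finite ι] (h : ∀ i, (s i).Finite ∨ s i = Set.univ) :
    (⋃ i, s i).Finite ∨ ⋃ i, s i = Set.univ := by
  by_cases huniv : ∃ i, s i = Set.univ
  · obtain ⟨i, hi⟩ := huniv
    exact Or.inr (Set.eq_univ_of_univ_subset (hi ▸ Set.subset_iUnion s i))
  · exact Or.inl (Set.finite_iUnion fun i => (h i).resolve_right fun hi => huniv ⟨i, hi⟩)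

end FiniteOrUniv

theorem Polynomial.finite_or_eq_univ_setOf_isRoot {R : Type*} [CommRing R] [IsDomain R]
    (p : R[X]) : {x | p.IsRoot x}.Finite ∨ {x | p.IsRoot x} = Set.univ := by
  by_cases hp : p = 0
  · simp [hp]
  · exact Or.inl (finite_setOfPred_isRoot hp)

theorem linearIndependent_iff_exists_det_ne_zero {K W ι : Type*} [Field K] [AddCommGroup W]
    [Module K W] [Fintype ι] [DecidableEq ι] {v : ι → W} :
    LinearIndependent K v ↔ ∃ ψ : W →ₗ[K] ι → K, (Matrix.of fun i j => ψ (v j) i).det ≠ 0 := by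
  constructor
  · intro hv
    obtain ⟨ψ, hψ⟩ := (Fintype.linearCombination K v).exists_leftInverse_of_injective
      (LinearMap.ker_eq_bot.mpr hv.fintypeLinearCombination_injective)
    have hψv : ∀ j, ψ (v j) = Pi.single j 1 := fun j => by
      simpa using LinearMap.congr_fun hψ (Pi.single j 1)
    refine ⟨ψ, ?_⟩
    have : (Matrix.of fun i j => ψ (v j) i) = 1 := by
      ext i j
      simp [hψv, Matrix.one_apply, Pi.single_apply]
    simp [this]
  · rintro ⟨ψ, hψ⟩
    exact LinearIndependent.of_comp ψ
      (Matrix.linearIndependent_cols_iff_isUnit.mpr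
        ((Matrix.isUnit_iff_isUnit_det _).mpr hψ.isUnit))

theorem MvPolynomial.exists_polynomial_eval_eq_linearMap_eval {R A : Type*} [CommSemiring R]
    [CommSemiring A] [Algebra R A] (ψ : A →ₗ[R] R) (p : MvPolynomial (Fin 1) A) :
    ∃ q : R[X], ∀ x : R, ψ (eval (fun _ => algebraMap R A x) p) = q.eval x := by
  induction p using MvPolynomial.induction_on with
  | C a => exact ⟨Polynomial.C (ψ a), fun x => by simp⟩
  | add p p' hp hp' =>
    obtain ⟨q, hq⟩ := hp
    obtain ⟨q', hq'⟩ := hp'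
    exact ⟨q + q', fun x => by simp [hq, hq']⟩
  | mul_X p _ hp =>
    obtain ⟨q, hq⟩ := hp
    exact ⟨q * Polynomial.X, fun x => by simp [← hq, ← Algebra.smul_def', mul_comm]⟩

theorem finite_or_eq_univ_setOf_not_linearIndependent {K A ι : Type*} [Field K] [CommRing A]
    [Algebra K A] [Fintype ι] [DecidableEq ι] (p : ι → MvPolynomial (Fin 1) A) :
    Set.Finite {x : K | ¬ LinearIndependent K
        fun j => MvPolynomial.eval (fun _ => algebraMap K A x) (p j)} ∨
      {x : K | ¬ LinearIndependent K
        fun j => MvPolynomial.eval (fun _ => algebraMap K A x) (p j)} = Set.univ := by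
  choose q hq using fun (ψ : A →ₗ[K] ι → K) i j =>
    (p j).exists_polynomial_eval_eq_linearMap_eval (LinearMap.proj i ∘ₗ ψ)
  have hlocus : {x : K | ¬ LinearIndependent K
      fun j => MvPolynomial.eval (fun _ => algebraMap K A x) (p j)} =
      ⋂ ψ, {x | (Matrix.of (q ψ)).det.IsRoot x} := by
    ext x
    have hdet : ∀ ψ, (Matrix.of (q ψ)).det.eval x = (Matrix.of fun i j =>
        ψ (MvPolynomial.eval (fun _ => algebraMap K A x) (p j)) i).det := fun ψ => by
      rw [← coe_evalRingHom, RingHom.map_det]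
      congr 1
      ext i j
      exact (hq ψ i j x).symm
    simp [linearIndependent_iff_exists_det_ne_zero, hdet]
  rw [hlocus]
  exact finite_or_eq_univ_iInter fun ψ => finite_or_eq_univ_setOf_isRoot _

theorem finite_or_eq_univ_of_isPairClosed {Ω : Type*} [Field Ω] (k : Subfield Ω)
    {C : Set (Fin 1 → Ω)} (hC : IsPairClosed k C) :
    {x : k | (fun _ => (x : Ω)) ∈ C}.Finite ∨ {x : k | (fun _ => (x : Ω)) ∈ C} = Set.univ := by
  obtain ⟨t, B, hB, rfl⟩ := hC
  simp only [Set.mem_iUnion, Set.ofPred_exists]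
  refine finite_or_eq_univ_iUnion fun i => ?_
  obtain ⟨m, ks, p, hBi⟩ := hB i
  simp only [hBi, Set.mem_iInter, Set.mem_ofPred_eq, Set.ofPred_forall]
  exact finite_or_eq_univ_iInter fun l =>
    finite_or_eq_univ_setOf_not_linearIndependent (K := k) (p l)

theorem stmt10_general {Ω : Type*} [Field Ω]
    (k : Subfield Ω)
    (C : Set (Fin 1 → Ω)) (hC : IsPairClosed k C)
    (hproperSub : {x : Ω | (fun _ : Fin 1 => x) ∈ C} ∩ (k : Set Ω) ≠ (k : Set Ω)) :
    ({x : Ω | (fun _ : Fin 1 => x) ∈ C} ∩ (k : Set Ω)).Finite := by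
  have htrace : {x : Ω | (fun _ : Fin 1 => x) ∈ C} ∩ (k : Set Ω) =
      Subtype.val '' {x : k | (fun _ => (x : Ω)) ∈ C} := by
    ext x
    simp [and_comm]
  rw [htrace] at hproperSub ⊢
  rcases finite_or_eq_univ_of_isPairClosed k hC with hfin | huniv
  · exact hfin.image _
  · rw [huniv, Set.image_univ, Subtype.range_coe] at hproperSub
    exact absurd rfl hproperSub

/-- Every proper closed subset of `k` in the subspace topology induced by the
pair topology on `Ω` is finite. -/
theorem stmt10 {Ω : Type*} [Field Ω] [IsAlgClosed Ω]
    (k : Subfield Ω) (hk : IsAlgClosed k) (hproper : k ≠ ⊤)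
    (C : Set (Fin 1 → Ω)) (hC : IsPairClosed k C)
    (hproperSub : {x : Ω | (fun _ : Fin 1 => x) ∈ C} ∩ (k : Set Ω) ≠ (k : Set Ω)) :
    ({x : Ω | (fun _ : Fin 1 => x) ∈ C} ∩ (k : Set Ω)).Finite :=
  stmt10_general k C hC hproperSub
end

section
/- Let Ω be an algebraically closed field with proper algebraically closed subfield k, and give Ωⁿ the pair topology. If C ⊊ Ωⁿ is a proper closed set, then sdim(C) < n; in particular every element (α₁,…,αₙ) of the basic closed set Yₙ (tuples linearly dependent over k) satisfies: some αᵢ lies in the k-span of the others, hence in the algebraic closure of k(α₁,…,α̂ᵢ,…,αₙ), so the tuple is not scl-independent over any base. -/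
/-- The small closure of `A ⊆ Ω` relative to the subfield `k`: the set of
elements of `Ω` algebraic over the field `k(A)` generated by `k ∪ A`. -/
def scl {Ω : Type*} [Field Ω] (k : Subfield Ω) (A : Set Ω) : Set Ω :=
  {x : Ω | IsAlgebraic (↥(IntermediateField.adjoin k A)) x}

/-- An element of the `k`-span of a set `S` lies in `scl k S`. -/
lemma mem_scl_of_mem_span {Ω : Type*} [Field Ω] (k : Subfield Ω) (S : Set Ω) (x : Ω)
    (hx : x ∈ Submodule.span k S) : x ∈ scl k S := by
  have hx' : x ∈ IntermediateField.adjoin k S := by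
    have hle : Submodule.span k S ≤ Subalgebra.toSubmodule
        (IntermediateField.adjoin k S).toSubalgebra :=
      Submodule.span_le.mpr (IntermediateField.subset_adjoin k S)
    exact hle hx
  have := isAlgebraic_algebraMap (R := ↥(IntermediateField.adjoin k S)) (A := Ω)
    (⟨x, hx'⟩ : ↥(IntermediateField.adjoin k S))
  simpa [scl] using this

/-- If `(α₁, …, αₙ)` lies in the basic closed set `Yₙ` (it is linearly dependent
over `k`), then some `αᵢ` lies in the `k`-span of the remaining coordinates, and
hence in the small closure of the remaining coordinates; so the tuple is not
`scl`-independent and `sdim Yₙ < n`. -/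
theorem stmt14 {Ω : Type*} [Field Ω] [IsAlgClosed Ω]
    (k : Subfield Ω) (hk : IsAlgClosed k) (hproper : k ≠ ⊤)
    {n : ℕ} (α : Fin n → Ω) (h : ¬ LinearIndependent k α) :
    ∃ i : Fin n, α i ∈ Submodule.span k {x : Ω | ∃ j, j ≠ i ∧ α j = x} ∧
      α i ∈ scl k {x : Ω | ∃ j, j ≠ i ∧ α j = x} := by
  obtain ⟨g, hsum, i, hgi⟩ := Fintype.not_linearIndependent_iff.mp h
  have hmem : α i ∈ Submodule.span k {x : Ω | ∃ j, j ≠ i ∧ α j = x} := by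
    have hspan : α i = (g i)⁻¹ • (- ∑ j ∈ Finset.univ.erase i, g j • α j) := by
      have h1 : g i • α i + ∑ j ∈ Finset.univ.erase i, g j • α j = 0 := by
        rw [← Finset.add_sum_erase _ _ (Finset.mem_univ i)] at hsum
        exact hsum
      have h2 : g i • α i = - ∑ j ∈ Finset.univ.erase i, g j • α j := by
        linear_combination h1
      rw [← h2, smul_smul, inv_mul_cancel₀ hgi, one_smul]
    rw [hspan]
    refine Submodule.smul_mem _ _ (Submodule.neg_mem _ (Submodule.sum_mem _ ?_))
    intro j hj
    exact Submodule.smul_mem _ _ (Submodule.subset_span ⟨j, Finset.ne_of_mem_erase hj, rfl⟩)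
  exact ⟨i, hmem, mem_scl_of_mem_span k _ _ hmem⟩
end
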